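/- arXiv:2211.00897 — 10 statements merged into one kernel-verified Lean document; each statement's English description precedes it below -/
import Mathlib

section
/- Let n be divisible by 8 and q an odd prime power with gcd(n,q)=1, and let a be an odd integer with 0 ≤ a ≤ n−1. Then the shift map φ_{n/2}(x) = (x + n/2) mod n maps the q-cyclotomic coset modulo n containing a bijectively onto the q-cyclotomic coset modulo n containing a + n/2; in particular these two cosets have the same cardinality, and both consist only of odd residues. -/
/-- For `8 ∣ n`, `q` an odd prime power with `gcd(n,q)=1`, and `a` odd with
`0 ≤ a ≤ n-1`, the shift map `φ_{n/2}` maps the q-cyclotomic coset `Z(a)` bijectively onto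
`Z(a + n/2)`; the two cosets have the same cardinality and both consist only of odd residues. -/
theorem shift_maps_cyclotomic_coset (n q : ℕ) (hn : 8 ∣ n) (hq : IsPrimePow q) (hqodd : Odd q)
    (hnq : Nat.gcd n q = 1) (a : ℕ) (ha : a ≤ n - 1) (haodd : Odd a)
    (Z : ℕ → Set ℕ) (hZ : ∀ c, Z c = {x | ∃ j : ℕ, x = c * q ^ j % n}) :
    Set.BijOn (fun x => (x + n / 2) % n) (Z a) (Z ((a + n / 2) % n)) ∧
      Nat.card (Z a) = Nat.card (Z ((a + n / 2) % n)) ∧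
      (∀ x ∈ Z a, Odd x) ∧ (∀ x ∈ Z ((a + n / 2) % n), Odd x) := by
  obtain ⟨k, hk⟩ := hn
  have ha2 : a % 2 = 1 := Nat.odd_iff.mp haodd
  have hpos : 0 < n := by
    rcases Nat.eq_zero_or_pos n with h0 | h; · omega
    exact h
  have h2n : 2 ∣ n := ⟨4 * k, by omega⟩
  have hn2 : n / 2 = 4 * k := by omega
  -- the key commutation identity
  have key : ∀ j : ℕ, ((a + n / 2) % n * q ^ j) % n = (a * q ^ j % n + n / 2) % n := by
    intro j
    obtain ⟨m, hm⟩ := hqodd.pow (n := j)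
    have heq : (a + n / 2) * q ^ j = (a * q ^ j + n / 2) + n * m := by
      rw [hm, hn2, hk]; ring
    rw [Nat.mod_mul_mod, Nat.mod_add_mod, heq, Nat.add_mul_mod_self_left]
  have hbij : Set.BijOn (fun x => (x + n / 2) % n) (Z a) (Z ((a + n / 2) % n)) := by
    refine ⟨?_, ?_, ?_⟩
    · intro x hx
      rw [hZ] at hx ⊢
      obtain ⟨j, rfl⟩ := hx
      exact ⟨j, (key j).symm⟩
    · intro x hx y hy hxy
      rw [hZ] at hx hy
      obtain ⟨j, rfl⟩ := hx
      obtain ⟨i, rfl⟩ := hy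
      simp only at hxy
      have h1 : a * q ^ j % n < n := Nat.mod_lt _ hpos
      have h2 : a * q ^ i % n < n := Nat.mod_lt _ hpos
      have hmod : ∀ x, x < n → (x + n / 2) % n + n = x + n / 2 + n ∨
          (x + n / 2) % n + n = x + n / 2 := by
        intro x hx
        rcases lt_or_ge (x + n / 2) n with h | h
        · exact Or.inl (by rw [Nat.mod_eq_of_lt h])
        · right; rw [Nat.mod_eq_sub_mod h, Nat.mod_eq_of_lt (by omega)]; omega
      rcases hmod _ h1 with h3 | h3 <;> rcases hmod _ h2 with h4 | h4 <;> omega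
    · intro y hy
      rw [hZ] at hy
      obtain ⟨j, rfl⟩ := hy
      refine ⟨a * q ^ j % n, ?_, ?_⟩
      · rw [hZ]; exact ⟨j, rfl⟩
      · simp only
        rw [key]
  have hodd1 : ∀ x ∈ Z a, Odd x := by
    intro x hx
    rw [hZ] at hx
    obtain ⟨j, rfl⟩ := hx
    have h1 : a * q ^ j % 2 = 1 := Nat.odd_iff.mp (haodd.mul (hqodd.pow))
    rw [Nat.odd_iff, Nat.mod_mod_of_dvd _ h2n, h1]
  have hodd2 : ∀ x ∈ Z ((a + n / 2) % n), Odd x := by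
    intro x hx
    rw [hZ] at hx
    obtain ⟨j, rfl⟩ := hx
    have hc : Odd ((a + n / 2) % n) := by
      rw [Nat.odd_iff, Nat.mod_mod_of_dvd _ h2n]
      omega
    have h1 : (a + n / 2) % n * q ^ j % 2 = 1 := Nat.odd_iff.mp (hc.mul (hqodd.pow))
    rw [Nat.odd_iff, Nat.mod_mod_of_dvd _ h2n, h1]
  exact ⟨hbij, Nat.card_congr (hbij.equiv _), hodd1, hodd2⟩
end

section
/- Let n = 3^t·k with t ≥ 3, k positive, gcd(k,3)=1, and let 1 ≤ e ≤ n−1. Then the set A_e = { (e·k + i·n/3^{t−1}) mod n : 0 ≤ i ≤ 3^{t−1}−1 } is a union of 4-cyclotomic cosets modulo n; that is, A_e is closed under multiplication by 4 modulo n. -/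
/-!
Write `M = 3^(t-1)` and `d = n / M`, so that `n = M d` and `A_e` is the progression
`e k + d ℤ` reduced modulo `n`, indexed by `i mod M`. Since `d ∣ 3 k`, we have
`4 e k = e k + c d` for some `c`, so multiplying by `4` sends the progression into itself,
acting on the indices as the affine map `i ↦ c + 4 i (mod M)`; this map is a bijection
because `4` is prime to `M`.
-/

open Finset

def progressionMod (a d M : ℕ) : Finset ℕ :=
  (range M).image fun i => (a + i * d) % (M * d)

lemma image_add_mul_mod_range {q M : ℕ} (c : ℕ) (hq : q.Coprime M) :
    (range M).image (fun i => (c + q * i) % M) = range M := by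
  rcases M.eq_zero_or_pos with rfl | hM
  · simp
  refine eq_of_subset_of_card_le (fun x hx => ?_) (card_image_of_injOn ?_).ge
  · obtain ⟨i, -, rfl⟩ := mem_image.mp hx
    exact mem_range.mpr (Nat.mod_lt _ hM)
  · intro i hi j hj hij
    have hqij : q * i ≡ q * j [MOD M] := Nat.ModEq.add_left_cancel' c hij
    have hij' : i ≡ j [MOD M] := hqij.cancel_left_of_coprime (Nat.coprime_comm.mp hq)
    rwa [Nat.ModEq, Nat.mod_eq_of_lt (mem_range.mp hi), Nat.mod_eq_of_lt (mem_range.mp hj)]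
      at hij'

lemma mul_progression_term_mod {q a c d : ℕ} (M i : ℕ) (hqa : q * a = a + c * d) :
    q * ((a + i * d) % (M * d)) % (M * d) = (a + (c + q * i) % M * d) % (M * d) := by
  have hexpand : q * (a + i * d) = a + (c + q * i) % M * d + (c + q * i) / M * (M * d) := by
    linear_combination hqa + d * (Nat.mod_add_div (c + q * i) M).symm
  rw [Nat.mul_mod_mod, hexpand, Nat.add_mul_mod_self_right]

theorem image_mul_mod_progressionMod {q a c d M : ℕ} (hq : q.Coprime M)
    (hqa : q * a = a + c * d) :
    (progressionMod a d M).image (fun x => q * x % (M * d)) = progressionMod a d M := by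
  calc (progressionMod a d M).image (fun x => q * x % (M * d))
      = (range M).image (fun i => (a + (c + q * i) % M * d) % (M * d)) := by
        rw [progressionMod, image_image]
        exact image_congr fun i _ => mul_progression_term_mod M i hqa
    _ = ((range M).image fun i => (c + q * i) % M).image fun i => (a + i * d) % (M * d) := by
        rw [image_image]; rfl
    _ = progressionMod a d M := by rw [image_add_mul_mod_range c hq, progressionMod]

theorem Ae_union_of_cyclotomic_cosets_general (n t k e : ℕ) (hn : n = 3 ^ t * k) :
    (Finset.image (fun x => 4 * x % n)
        ((Finset.range (3 ^ (t - 1))).image (fun i => (e * k + i * (n / 3 ^ (t - 1))) % n))) =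
      (Finset.range (3 ^ (t - 1))).image (fun i => (e * k + i * (n / 3 ^ (t - 1))) % n) := by
  generalize hd : n / 3 ^ (t - 1) = d
  have hMn : 3 ^ (t - 1) ∣ n := hn ▸ (Nat.pow_dvd_pow 3 (t.sub_le 1)).mul_right k
  have hnd : n = 3 ^ (t - 1) * d := by rw [← hd, Nat.mul_div_cancel' hMn]
  obtain ⟨u, hu⟩ : d ∣ 3 * k := by
    refine Nat.dvd_of_mul_dvd_mul_left (pow_pos three_pos (t - 1)) ?_
    rw [← hnd, hn, ← mul_assoc, ← pow_succ]
    exact Nat.mul_dvd_mul_right (Nat.pow_dvd_pow 3 (by omega : t ≤ t - 1 + 1)) k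
  have hmul : 4 * (e * k) = e * k + e * u * d := by linear_combination e * hu
  subst hnd
  exact image_mul_mod_progressionMod (Nat.Coprime.pow_right _ (by norm_num)) hmul

/-- With `n = 3^t·k`, `t ≥ 3`, `gcd(k,3)=1`, `1 ≤ e ≤ n-1`, the set
`A_e = {(e·k + i·n/3^(t-1)) mod n : 0 ≤ i ≤ 3^(t-1)-1}` is closed under multiplication
by 4 modulo n, i.e. it is a union of 4-cyclotomic cosets modulo n. -/
theorem Ae_union_of_cyclotomic_cosets (n t k e : ℕ) (ht : 3 ≤ t) (hk : 0 < k)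
    (hk3 : Nat.gcd k 3 = 1) (hn : n = 3 ^ t * k) (he1 : 1 ≤ e) (he2 : e ≤ n - 1) :
    (Finset.image (fun x => 4 * x % n)
        ((Finset.range (3 ^ (t - 1))).image (fun i => (e * k + i * (n / 3 ^ (t - 1))) % n))) =
      (Finset.range (3 ^ (t - 1))).image (fun i => (e * k + i * (n / 3 ^ (t - 1))) % n) :=
  Ae_union_of_cyclotomic_cosets_general n t k e hn
end

section
/- Let q be an odd prime power and n divisible by 8 with gcd(n,q)=1, and let α be a primitive n-th root of unity in an extension field K of F_q. Let σ be the permutation of {0,…,n−1} with σ(i)=i if i ≡ 0 or 1 (mod 4) and σ(i)=(i+n/2) mod n otherwise, and let d_i = −1 if i ≡ 1 or 2 (mod 4) and d_i = 1 otherwise. Then for every b ∈ {0,…,n−1} with b odd and every i, one has d_i · α^{σ(i)·b} = α^{i·(b + n/2)}. (Equivalently, the monomial transformation v ↦ (d_i v_{σ^{-1}(i)})_i maps the vector v^b = (α^{ib})_{i=0}^{n-1} to v^{b'} with b' = (b+n/2) mod n.) -/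
/-- For `8 ∣ n`, `q` an odd prime power with `gcd(n,q)=1`, `K ⊇ F_q` of odd
characteristic with primitive n-th root of unity `α`, the monomial transformation given by
`σ` and the signs `d` maps `v^b` to `v^{b+n/2}` for every odd `b < n`:
`d_i · α^{σ(i)·b} = α^{i·(b+n/2)}`. -/
theorem monomial_transform_shifts_vb (n q : ℕ) (hn : 8 ∣ n) (hq : IsPrimePow q) (hqodd : Odd q)
    (hnq : Nat.gcd n q = 1) (K : Type*) [Field K] (hK : ringChar K ≠ 2)
    (α : K) (hα : IsPrimitiveRoot α n)
    (σ : ℕ → ℕ) (hσ : ∀ i, σ i = if i % 4 = 0 ∨ i % 4 = 1 then i else (i + n / 2) % n)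
    (d : ℕ → K) (hd : ∀ i, d i = if i % 4 = 1 ∨ i % 4 = 2 then -1 else 1) :
    ∀ b, b < n → Odd b → ∀ i, i < n → d i * α ^ (σ i * b) = α ^ (i * (b + n / 2)) := by
  have hq1 : 1 < q := hq.one_lt
  have hn0 : n ≠ 0 := by
    rintro rfl
    simp [Nat.gcd_zero_left] at hnq
    omega
  have h2n : 2 ∣ n := dvd_trans (by norm_num) hn
  have h2K : (2 : K) ≠ 0 := Ring.two_ne_zero hK
  have hne : (-1 : K) ≠ 1 := by
    intro h
    apply h2K
    linear_combination -h
  have hhalf : α ^ (n / 2) = -1 := by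
    have hsq : α ^ (n / 2) * α ^ (n / 2) = 1 := by
      rw [← pow_add]
      have : n / 2 + n / 2 = n := by omega
      rw [this, hα.pow_eq_one]
    rcases mul_self_eq_one_iff.mp hsq with h | h
    · exfalso
      have := (hα.pow_eq_one_iff_dvd (n / 2)).mp h
      have := Nat.le_of_dvd (by omega) this
      omega
    · exact h
  have hmod : ∀ a : ℕ, α ^ (a % n) = α ^ a := by
    intro a
    conv_rhs => rw [← Nat.div_add_mod a n]
    rw [pow_add, pow_mul, hα.pow_eq_one, one_pow, one_mul]
  intro b hb hbodd i hi
  have key : α ^ (i * (b + n / 2)) = α ^ (i * b) * (-1 : K) ^ i := by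
    have h : i * (b + n / 2) = i * b + (n / 2) * i := by ring
    rw [h, pow_add]
    congr 1
    rw [pow_mul, hhalf]
  have key2 : α ^ ((i + n / 2) % n * b) = α ^ (i * b) * (-1 : K) ^ b := by
    rw [pow_mul, hmod, pow_add, hhalf, mul_pow, ← pow_mul]
  have hbneg : (-1 : K) ^ b = -1 := hbodd.neg_one_pow
  have hpar : i % 2 = i % 4 % 2 := (Nat.mod_mod_of_dvd i (by norm_num)).symm
  have h4 : i % 4 = 0 ∨ i % 4 = 1 ∨ i % 4 = 2 ∨ i % 4 = 3 := by omega
  rw [hσ, hd, key]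
  rcases h4 with h | h | h | h
  · have hie : Even i := Nat.even_iff.mpr (by omega)
    simp only [h, hie.neg_one_pow]
    norm_num
  · have hio : Odd i := Nat.odd_iff.mpr (by omega)
    simp only [h, hio.neg_one_pow]
    norm_num
  · have hie : Even i := Nat.even_iff.mpr (by omega)
    simp only [h, hie.neg_one_pow]
    norm_num
    rw [key2, hbneg]
    ring
  · have hio : Odd i := Nat.odd_iff.mpr (by omega)
    simp only [h, hio.neg_one_pow]
    norm_num
    rw [key2, hbneg]
    ring
end

section
/- Let n be a positive odd integer divisible by 27, F_4 = {0,1,ω,ω²} with ω² = ω+1, and let α be a primitive n-th root of unity in an extension K of F_4 with α^{n/3} = ω. Define u ∈ K^n by u = v^{n/9} + v^{4n/9} + v^{7n/9} where v^s = (α^{js})_{j=0}^{n−1}. Then for each 0 ≤ j ≤ n−1: u_j = 1 if j ≡ 0 (mod 9), u_j = ω if j ≡ 3 (mod 9), u_j = ω² if j ≡ 6 (mod 9), and u_j = 0 otherwise. -/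
/-- `n` odd divisible by 27, `K ⊇ F_4` (characteristic 2) with `ω² = ω + 1` and a
primitive n-th root of unity `α` with `α^{n/3} = ω`. For `u = v^{n/9} + v^{4n/9} + v^{7n/9}`,
the entry `u_j` equals `1, ω, ω²` according as `j ≡ 0, 3, 6 (mod 9)`, and `0` otherwise. -/
theorem u_entries_mod_nine (n : ℕ) (hnodd : Odd n) (hn : 27 ∣ n)
    (K : Type*) [Field K] [CharP K 2] (ω : K) (hω : ω ^ 2 = ω + 1)
    (α : K) (hα : IsPrimitiveRoot α n) (hαω : α ^ (n / 3) = ω)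
    (u : ℕ → K)
    (hu : u = fun j => α ^ (j * (n / 9)) + α ^ (j * (4 * n / 9)) + α ^ (j * (7 * n / 9))) :
    ∀ j, j < n →
      u j = if j % 9 = 0 then 1 else if j % 9 = 3 then ω else if j % 9 = 6 then ω ^ 2 else 0 := by
  obtain ⟨m, rfl⟩ := hn
  subst hu
  intro j hjn
  have two : (2 : K) = 0 := by exact_mod_cast CharP.cast_eq_zero K 2
  have hω3 : ω ^ 3 = 1 := by linear_combination (ω + 1) * hω + ω * two
  have hsum : 1 + ω + ω ^ 2 = 0 := by linear_combination hω + ω * two + two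
  have h9 : 27 * m / 9 = 3 * m := by omega
  have h49 : 4 * (27 * m) / 9 = 12 * m := by omega
  have h79 : 7 * (27 * m) / 9 = 21 * m := by omega
  have h3 : 27 * m / 3 = 9 * m := by omega
  set b : K := α ^ (3 * m) with hb
  have hb3 : b ^ 3 = ω := by
    rw [hb, ← pow_mul]
    rw [h3] at hαω
    convert hαω using 2
    ring
  have e1 : α ^ (j * (27 * m / 9)) = b ^ j := by
    rw [h9, hb, ← pow_mul]
    congr 1
    ring
  have e2 : α ^ (j * (4 * (27 * m) / 9)) = b ^ (4 * j) := by
    rw [h49, hb, ← pow_mul]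
    congr 1
    ring
  have e3 : α ^ (j * (7 * (27 * m) / 9)) = b ^ (7 * j) := by
    rw [h79, hb, ← pow_mul]
    congr 1
    ring
  simp only [e1, e2, e3]
  have h4 : b ^ (4 * j) = b ^ j * ω ^ j := by
    rw [show 4 * j = j + 3 * j by ring, pow_add, pow_mul, hb3]
  have h7 : b ^ (7 * j) = b ^ j * (ω ^ j) ^ 2 := by
    rw [show 7 * j = j + 3 * j * 2 by ring, pow_add, pow_mul, pow_mul, hb3]
  have key : b ^ j + b ^ (4 * j) + b ^ (7 * j) = b ^ j * (1 + ω ^ j + (ω ^ j) ^ 2) := by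
    rw [h4, h7]; ring
  rw [key]
  have hωj : ω ^ j = ω ^ (j % 3) := by
    conv_lhs => rw [← Nat.div_add_mod j 3]
    rw [pow_add, pow_mul, hω3, one_pow, one_mul]
  have hcase : j % 3 = 0 ∨ j % 3 = 1 ∨ j % 3 = 2 := by omega
  rcases hcase with h | h | h
  · -- j ≡ 0 mod 3
    have hfac : (1 : K) + ω ^ j + (ω ^ j) ^ 2 = 1 := by
      rw [hωj, h, pow_zero]
      linear_combination two
    rw [hfac, mul_one]
    set k := j / 3 with hk
    have hjk : j = 3 * k := by omega
    have hbj : b ^ j = ω ^ k := by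
      rw [hjk, pow_mul, hb3]
    have hωk : ω ^ k = ω ^ (k % 3) := by
      conv_lhs => rw [← Nat.div_add_mod k 3]
      rw [pow_add, pow_mul, hω3, one_pow, one_mul]
    rw [hbj, hωk]
    have h9cases : j % 9 = 0 ∨ j % 9 = 3 ∨ j % 9 = 6 := by omega
    rcases h9cases with h9c | h9c | h9c
    · have : k % 3 = 0 := by omega
      rw [this, pow_zero]
      simp [h9c]
    · have : k % 3 = 1 := by omega
      rw [this, pow_one]
      have n0 : j % 9 ≠ 0 := by omega
      simp [h9c, n0]
    · have : k % 3 = 2 := by omega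
      rw [this]
      have n0 : j % 9 ≠ 0 := by omega
      have n3 : j % 9 ≠ 3 := by omega
      simp [h9c, n0, n3]
  · -- j ≡ 1 mod 3
    have hfac : (1 : K) + ω ^ j + (ω ^ j) ^ 2 = 0 := by
      rw [hωj, h, pow_one]
      linear_combination hsum
    rw [hfac, mul_zero]
    have n0 : j % 9 ≠ 0 := by omega
    have n3 : j % 9 ≠ 3 := by omega
    have n6 : j % 9 ≠ 6 := by omega
    simp [n0, n3, n6]
  · -- j ≡ 2 mod 3
    have hfac : (1 : K) + ω ^ j + (ω ^ j) ^ 2 = 0 := by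
      rw [hωj, h]
      linear_combination hsum + ω * hω3
    rw [hfac, mul_zero]
    have n0 : j % 9 ≠ 0 := by omega
    have n3 : j % 9 ≠ 3 := by omega
    have n6 : j % 9 ≠ 6 := by omega
    simp [n0, n3, n6]
end

section
/- Let n and q be coprime positive integers with q a prime power, let α be a primitive n-th root of unity in an extension K of F_q, and let A₁, A₂ ⊆ {0,…,n−1}. Suppose g₁(x) = ∏_{i∈A₁}(x − α^i) and g₂(x) = ∏_{i∈A₂}(x − α^i) both have all coefficients in F_q, A₁ is nonempty, and for a positive integer b the shift map φ_b(x) = (x+b) mod n satisfies φ_b(A₁) = A₂. Then n divides |A₁|·(q−1)·b. -/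
open Polynomial

/-- `gcd(n,q)=1`, `q` a prime power, `α` a primitive n-th root of unity in `K`,
`F ⊆ K` the subfield with `q` elements. If `g₁ = ∏_{i∈A₁}(X - α^i)` and
`g₂ = ∏_{i∈A₂}(X - α^i)` have all coefficients in `F`, `A₁ ≠ ∅`, and the shift by `b`
modulo `n` maps `A₁` onto `A₂`, then `n ∣ |A₁|·(q-1)·b`. -/
theorem shift_necessary_condition (n q : ℕ) (hn : 0 < n) (hq : IsPrimePow q)
    (hnq : Nat.gcd n q = 1) (K : Type*) [Field K] (α : K) (hα : IsPrimitiveRoot α n)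
    (F : Subfield K) (hF : Nat.card F = q)
    (A₁ A₂ : Finset ℕ) (hA₁ : ∀ i ∈ A₁, i < n) (hA₂ : ∀ i ∈ A₂, i < n)
    (hA₁ne : A₁.Nonempty)
    (hg₁ : ∀ m, (∏ i ∈ A₁, (X - C (α ^ i))).coeff m ∈ F)
    (hg₂ : ∀ m, (∏ i ∈ A₂, (X - C (α ^ i))).coeff m ∈ F)
    (b : ℕ) (hb : 0 < b)
    (hshift : A₁.image (fun i => (i + b) % n) = A₂) :
    n ∣ A₁.card * (q - 1) * b := by
  classical
  have hq2 : 2 ≤ q := hq.two_le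
  haveI : Finite F := Nat.finite_of_card_ne_zero (by omega)
  haveI : Fintype F := Fintype.ofFinite F
  have hcard : Fintype.card F = q := by rw [← Nat.card_eq_fintype_card]; exact hF
  have hα0 : α ≠ 0 := by
    intro h
    have h1 := hα.pow_eq_one
    rw [h, zero_pow hn.ne'] at h1
    exact zero_ne_one h1
  have hordα : orderOf α = n := (hα.eq_orderOf).symm
  set c₁ := ∏ i ∈ A₁, (0 - α ^ i) with hc₁
  set c₂ := ∏ i ∈ A₂, (0 - α ^ i) with hc₂
  have he : ∀ (A : Finset ℕ), (∏ i ∈ A, (X - C (α ^ i))).coeff 0 = ∏ i ∈ A, (0 - α ^ i) := by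
    intro A
    rw [Polynomial.coeff_zero_eq_eval_zero, Polynomial.eval_prod]
    simp
  have hc₁F : c₁ ∈ F := by have := hg₁ 0; rwa [he] at this
  have hc₂F : c₂ ∈ F := by have := hg₂ 0; rwa [he] at this
  have hc₁ne : c₁ ≠ 0 := by
    rw [hc₁]
    apply Finset.prod_ne_zero_iff.mpr
    intro i _
    simpa using pow_ne_zero i hα0
  have hpow : ∀ i, α ^ ((i + b) % n) = α ^ b * α ^ i := by
    intro i
    conv_lhs => rw [← hordα, pow_mod_orderOf]
    rw [pow_add, mul_comm]
  have hkey : c₂ = α ^ (b * A₁.card) * c₁ := by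
    rw [hc₂, ← hshift, Finset.prod_image (by
      intro i hi j hj h
      have : i % n = j % n := Nat.ModEq.add_right_cancel' b h
      rwa [Nat.mod_eq_of_lt (hA₁ i hi), Nat.mod_eq_of_lt (hA₁ j hj)] at this)]
    calc ∏ i ∈ A₁, (0 - α ^ ((i + b) % n))
        = ∏ i ∈ A₁, (α ^ b * (0 - α ^ i)) := by
          refine Finset.prod_congr rfl fun i _ => ?_
          rw [hpow]; ring
      _ = α ^ (b * A₁.card) * c₁ := by
          rw [Finset.prod_mul_distrib, Finset.prod_const, ← pow_mul]
  have hu : α ^ (b * A₁.card) ∈ F := by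
    have h : α ^ (b * A₁.card) = c₂ * c₁⁻¹ := by
      rw [hkey, mul_inv_cancel_right₀ hc₁ne]
    rw [h]
    exact F.mul_mem hc₂F (F.inv_mem hc₁F)
  have hx : (⟨α ^ (b * A₁.card), hu⟩ : F) ≠ 0 := by
    simp [Subtype.ext_iff, pow_ne_zero _ hα0]
  have h1 := FiniteField.pow_card_sub_one_eq_one _ hx
  rw [hcard] at h1
  have h2 := congrArg (F.subtype) h1
  simp only [map_pow, map_one, Subfield.coe_subtype] at h2
  have hone : α ^ (b * A₁.card * (q - 1)) = 1 := by
    rw [pow_mul]; exact h2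
  have hdvd := (hα.pow_eq_one_iff_dvd _).mp hone
  rwa [show A₁.card * (q - 1) * b = b * A₁.card * (q - 1) by ring]
end

section
/- Let n be a positive odd integer, δ a primitive 3n-th root of unity in an extension L of F_4 with δ^n = ω, and A ⊆ {3k+1 : 0 ≤ k ≤ n−1} nonempty such that g(x) = ∏_{i∈A}(x−δ^i) has coefficients in F_4. If a positive integer b satisfies φ_b(A) = A' ⊆ {3k+1 : 0 ≤ k ≤ n−1} with ∏_{i∈A'}(x−δ^i) ∈ F_4[x], where φ_b is the shift by b modulo 3n, then 3 divides b and n divides b·|A|. -/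
open Polynomial

/-- `n` odd, `δ` a primitive 3n-th root of unity in `L ⊇ F_4` (char 2) with
`δ^n = ω`, `A ⊆ {3k+1 : 0 ≤ k ≤ n-1}` nonempty with `g = ∏_{i∈A}(X - δ^i)` having all
coefficients in `F_4` (encoded by `c^4 = c`). If the shift by `b > 0` modulo `3n` maps `A`
onto `A' ⊆ {3k+1}` whose product polynomial also has `F_4` coefficients, then `3 ∣ b` and
`n ∣ b·|A|`. -/
theorem constacyclic_shift_necessary (n : ℕ) (hnodd : Odd n) (hn : 0 < n)
    (L : Type*) [Field L] [CharP L 2] (ω : L) (hω : ω ^ 2 = ω + 1)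
    (δ : L) (hδ : IsPrimitiveRoot δ (3 * n)) (hδn : δ ^ n = ω)
    (A A' : Finset ℕ)
    (hA : ∀ x ∈ A, x % 3 = 1 ∧ x < 3 * n)
    (hA' : ∀ x ∈ A', x % 3 = 1 ∧ x < 3 * n)
    (hAne : A.Nonempty)
    (hg : ∀ m, ((∏ i ∈ A, (X - C (δ ^ i))).coeff m) ^ 4 = (∏ i ∈ A, (X - C (δ ^ i))).coeff m)
    (hh : ∀ m, ((∏ i ∈ A', (X - C (δ ^ i))).coeff m) ^ 4 = (∏ i ∈ A', (X - C (δ ^ i))).coeff m)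
    (b : ℕ) (hb : 0 < b)
    (hshift : A.image (fun x => (x + b) % (3 * n)) = A') :
    3 ∣ b ∧ n ∣ b * A.card := by
  have h3n : 0 < 3 * n := by positivity
  have hδ1 : δ ^ (3 * n) = 1 := hδ.pow_eq_one
  have hδne : δ ≠ 0 := by
    intro h
    have := hδ1
    rw [h, zero_pow h3n.ne'] at this
    exact zero_ne_one this
  have hmod : ∀ m : ℕ, δ ^ (m % (3 * n)) = δ ^ m := by
    intro m
    conv_rhs => rw [← Nat.mod_add_div m (3 * n)]
    rw [pow_add, pow_mul, hδ1, one_pow, mul_one]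
  -- part 1 : 3 ∣ b
  obtain ⟨a, ha⟩ := hAne
  have ha' : (a + b) % (3 * n) ∈ A' := by
    rw [← hshift]; exact Finset.mem_image_of_mem _ ha
  have h1 := (hA a ha).1
  have h2 := (hA' _ ha').1
  have h3 : (a + b) % (3 * n) % 3 = (a + b) % 3 := Nat.mod_mod_of_dvd _ ⟨n, rfl⟩
  have hadd := Nat.add_mod a b 3
  have hb3 : 3 ∣ b := by omega
  refine ⟨hb3, ?_⟩
  -- part 2
  have key : ∀ B : Finset ℕ,
      ((∏ i ∈ B, (X - C (δ ^ i))).coeff 0) = δ ^ (∑ i ∈ B, i) := by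
    intro B
    rw [Polynomial.coeff_zero_eq_eval_zero, Polynomial.eval_prod]
    simp only [eval_sub, eval_X, eval_C, zero_sub, CharTwo.neg_eq]
    exact Finset.prod_pow_eq_pow_sum B _ δ
  have cube : ∀ c : L, c ^ 4 = c → c ≠ 0 → c ^ 3 = 1 := by
    intro c h4 hne
    have h : c ^ 3 * c = 1 * c := by rw [one_mul, ← pow_succ]; exact h4
    exact mul_right_cancel₀ hne h
  have hu3 : (δ ^ (∑ i ∈ A, i)) ^ 3 = 1 := by
    refine cube _ ?_ (pow_ne_zero _ hδne)
    rw [← key A]; exact hg 0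
  have hv3 : (δ ^ (∑ i ∈ A', i)) ^ 3 = 1 := by
    refine cube _ ?_ (pow_ne_zero _ hδne)
    rw [← key A']; exact hh 0
  have hinj : ∀ x ∈ A, ∀ y ∈ A, (x + b) % (3 * n) = (y + b) % (3 * n) → x = y := by
    intro x hx y hy h
    have hxl := (hA x hx).2
    have hyl := (hA y hy).2
    have h' : x % (3 * n) = y % (3 * n) := Nat.ModEq.add_right_cancel' b h
    rwa [Nat.mod_eq_of_lt hxl, Nat.mod_eq_of_lt hyl] at h'
  have hsum : ∑ i ∈ A', i = ∑ x ∈ A, (x + b) % (3 * n) := by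
    rw [← hshift, Finset.sum_image hinj]
  have hv' : δ ^ (∑ i ∈ A', i) = δ ^ ((∑ x ∈ A, x) + A.card * b) := by
    rw [hsum, ← Finset.prod_pow_eq_pow_sum]
    simp_rw [hmod]
    rw [Finset.prod_pow_eq_pow_sum]
    congr 1
    rw [Finset.sum_add_distrib, Finset.sum_const, smul_eq_mul]
  have hpow : δ ^ (3 * (b * A.card)) = 1 := by
    have h1 : (δ ^ ((∑ x ∈ A, x) + A.card * b)) ^ 3 = 1 := by rw [← hv']; exact hv3
    rw [← pow_mul, add_mul, pow_add, pow_mul, hu3, one_mul] at h1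
    rw [show 3 * (b * A.card) = A.card * b * 3 by ring]
    exact h1
  have hdvd : 3 * n ∣ 3 * (b * A.card) := hδ.dvd_of_pow_eq_one _ hpow
  exact (mul_dvd_mul_iff_left (by norm_num : (3:ℕ) ≠ 0)).mp hdvd
end

section
/- Let n be a positive odd integer and δ a primitive 3n-th root of unity in an extension L of F_4 with δ^n = ω. Suppose A, A' ⊆ {3k+1 : 0 ≤ k ≤ n−1}, g(x) = ∏_{i∈A}(x−δ^i), h(x) = ∏_{i∈A'}(x−δ^i), and 1 ≤ j ≤ n satisfies n | 3j·|A| and φ_{3j}(A) = A' (shift modulo 3n). Then the substitution map Θ(f(x)) = f(δ^{−3j} x) on L[x]/⟨x^n − ω⟩ is a well-defined ring automorphism, and Θ(g(x)) = a·h(x) where a = δ^{−3j|A|} ∈ F_4. -/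
/-!
For a unit `c` with `c ^ n = 1`, the substitution `X ↦ c X` fixes `X ^ n - ω`, so it descends to an
automorphism of `R[X] ⧸ ⟨X ^ n - ω⟩`. It sends `X - δ ^ i` to `c (X - c⁻¹ δ ^ i)`; for
`c = δ ^ (-3j)` this shifts the exponents of the roots by `3j` modulo `3n`, which is how `A` becomes
`A'`. The scalar `a = c ^ |A|` satisfies `a ^ 3 = 1` because `3n ∣ 9j|A|`, so `a ∈ 𝔽₄`.
-/

open Polynomial

section ScaleX

variable {R : Type*} [CommRing R]

noncomputable def scaleX (u : Rˣ) : R[X] ≃ₐ[R] R[X] :=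
  algEquivOfCompEqX (C (u : R) * X) (C ((u⁻¹ : Rˣ) : R) * X)
    (by simp [← C_mul, ← mul_assoc]) (by simp [← C_mul, ← mul_assoc])

theorem scaleX_apply (u : Rˣ) (p : R[X]) : scaleX u p = p.comp (C (u : R) * X) :=
  comp_eq_aeval.symm

theorem scaleX_X_pow_sub_C {n : ℕ} {u : Rˣ} (hu : (u : R) ^ n = 1) (ω : R) :
    scaleX u (X ^ n - C ω) = X ^ n - C ω := by
  rw [scaleX_apply, sub_comp, pow_comp, X_comp, C_comp, mul_pow, ← C_pow, hu, C_1, one_mul]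

theorem X_sub_C_comp_C_mul_X (u : Rˣ) (r : R) :
    (X - C r).comp (C ((u⁻¹ : Rˣ) : R) * X) = C ((u⁻¹ : Rˣ) : R) * (X - C (u * r)) := by
  rw [sub_comp, X_comp, C_comp, mul_sub, ← C_mul, u.inv_mul_cancel_left]

theorem prod_X_sub_C_comp_C_mul_X {ι : Type*} (s : Finset ι) (r : ι → R) (u : Rˣ) :
    (∏ i ∈ s, (X - C (r i))).comp (C ((u⁻¹ : Rˣ) : R) * X) =
      C (((u⁻¹ : Rˣ) : R) ^ s.card) * ∏ i ∈ s, (X - C (u * r i)) := by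
  rw [prod_comp, Finset.prod_congr rfl fun i _ => X_sub_C_comp_C_mul_X u (r i),
    Finset.prod_mul_distrib, Finset.prod_const, C_pow]

noncomputable def scaleXQuot {n : ℕ} (ω : R) (u : Rˣ) (hu : (u : R) ^ n = 1) :
    (R[X] ⧸ Ideal.span {(X : R[X]) ^ n - C ω}) ≃ₐ[R] (R[X] ⧸ Ideal.span {(X : R[X]) ^ n - C ω}) :=
  Ideal.quotientEquivAlg _ _ (scaleX u) <| by
    rw [Ideal.map_span, Set.image_singleton]
    exact congrArg (fun p => Ideal.span {p}) (scaleX_X_pow_sub_C hu ω).symm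

theorem scaleXQuot_mk {n : ℕ} (ω : R) (u : Rˣ) (hu : (u : R) ^ n = 1) (p : R[X]) :
    scaleXQuot ω u hu (Ideal.Quotient.mk _ p) = Ideal.Quotient.mk _ (p.comp (C (u : R) * X)) := by
  rw [scaleXQuot, Ideal.quotientEquivAlg_mk, scaleX_apply]

end ScaleX

theorem Finset.prod_image_add_mod {M : Type*} [CommMonoid M] {m : ℕ} {A : Finset ℕ}
    (hA : ∀ x ∈ A, x < m) (k : ℕ) (f : ℕ → M) :
    ∏ i ∈ A.image (fun x => (x + k) % m), f i = ∏ i ∈ A, f ((i + k) % m) := by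
  refine Finset.prod_image fun x hx y hy hxy => ?_
  have := Nat.ModEq.add_right_cancel' k hxy
  rwa [Nat.ModEq, Nat.mod_eq_of_lt (hA x hx), Nat.mod_eq_of_lt (hA y hy)] at this

theorem substitution_automorphism_general (n : ℕ) (hn : 0 < n)
    (L : Type*) [Field L] (ω : L)
    (δ : L) (hδ : IsPrimitiveRoot δ (3 * n))
    (A A' : Finset ℕ)
    (hA : ∀ x ∈ A, x % 3 = 1 ∧ x < 3 * n)
    (j : ℕ) (hdiv : n ∣ 3 * j * A.card)
    (hshift : A.image (fun x => (x + 3 * j) % (3 * n)) = A') :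
    ∃ Θ : (L[X] ⧸ Ideal.span {(X : L[X]) ^ n - C ω}) ≃ₐ[L]
        (L[X] ⧸ Ideal.span {(X : L[X]) ^ n - C ω}),
      Θ (Ideal.Quotient.mk _ X) = Ideal.Quotient.mk _ (C ((δ ^ (3 * j))⁻¹) * X) ∧
      Θ (Ideal.Quotient.mk _ (∏ i ∈ A, (X - C (δ ^ i)))) =
        Ideal.Quotient.mk _ (C ((δ ^ (3 * j * A.card))⁻¹) * ∏ i ∈ A', (X - C (δ ^ i))) ∧
      ((δ ^ (3 * j * A.card))⁻¹) ^ 4 = (δ ^ (3 * j * A.card))⁻¹ := by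
  set u : Lˣ := (hδ.isUnit (by positivity)).unit ^ (3 * j)
  have hu : (u : L) = δ ^ (3 * j) := by simp [u]
  have hu_pow : ((u⁻¹ : Lˣ) : L) ^ n = 1 := by
    rw [Units.val_inv_eq_inv_val, hu, inv_pow, ← pow_mul, (hδ.pow_eq_one_iff_dvd _).2 ⟨j, by ring⟩,
      inv_one]
  have ha : (δ ^ (3 * j * A.card)) ^ 3 = 1 := by
    rw [← pow_mul, hδ.pow_eq_one_iff_dvd]
    exact mul_comm 3 n ▸ mul_dvd_mul_right hdiv 3
  refine ⟨scaleXQuot ω u⁻¹ hu_pow, ?_, ?_, ?_⟩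
  · rw [scaleXQuot_mk, X_comp, Units.val_inv_eq_inv_val, hu]
  · rw [scaleXQuot_mk, prod_X_sub_C_comp_C_mul_X, ← hshift,
      Finset.prod_image_add_mod (fun x hx => (hA x hx).2)]
    congr 3
    · rw [Units.val_inv_eq_inv_val, hu, inv_pow, ← pow_mul]
    · funext i
      rw [hu, ← pow_add, add_comm, ← pow_eq_pow_mod _ hδ.pow_eq_one]
  · rw [pow_succ, inv_pow, ha, inv_one, one_mul]

/-- `n` odd, `δ` a primitive 3n-th root of unity in `L ⊇ F_4` (char 2) with
`δ^n = ω`. With defining sets `A, A' ⊆ {3k+1}`, `g = ∏_{i∈A}(X-δ^i)`, `h = ∏_{i∈A'}(X-δ^i)`,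
`1 ≤ j ≤ n`, `n ∣ 3j·|A|`, and the shift by `3j` mapping `A` onto `A'`, the substitution
`Θ(f(x)) = f(δ^{-3j}x)` is a well-defined algebra automorphism of `L[x]/⟨x^n - ω⟩` (sending
the class of `x` to the class of `δ^{-3j}x`) with `Θ(g) = a·h` where `a = δ^{-3j|A|} ∈ F_4`. -/
theorem substitution_automorphism (n : ℕ) (hnodd : Odd n) (hn : 0 < n)
    (L : Type*) [Field L] [CharP L 2] (ω : L) (hω : ω ^ 2 = ω + 1)
    (δ : L) (hδ : IsPrimitiveRoot δ (3 * n)) (hδn : δ ^ n = ω)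
    (A A' : Finset ℕ)
    (hA : ∀ x ∈ A, x % 3 = 1 ∧ x < 3 * n)
    (hA' : ∀ x ∈ A', x % 3 = 1 ∧ x < 3 * n)
    (j : ℕ) (hj1 : 1 ≤ j) (hj2 : j ≤ n) (hdiv : n ∣ 3 * j * A.card)
    (hshift : A.image (fun x => (x + 3 * j) % (3 * n)) = A') :
    ∃ Θ : (L[X] ⧸ Ideal.span {(X : L[X]) ^ n - C ω}) ≃ₐ[L]
        (L[X] ⧸ Ideal.span {(X : L[X]) ^ n - C ω}),
      Θ (Ideal.Quotient.mk _ X) = Ideal.Quotient.mk _ (C ((δ ^ (3 * j))⁻¹) * X) ∧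
      Θ (Ideal.Quotient.mk _ (∏ i ∈ A, (X - C (δ ^ i)))) =
        Ideal.Quotient.mk _ (C ((δ ^ (3 * j * A.card))⁻¹) * ∏ i ∈ A', (X - C (δ ^ i))) ∧
      ((δ ^ (3 * j * A.card))⁻¹) ^ 4 = (δ ^ (3 * j * A.card))⁻¹ :=
  substitution_automorphism_general n hn L ω δ hδ A A' hA j hdiv hshift
end

section
/- Let n be divisible by 8, q an odd prime power with gcd(n,q) = 1, α a primitive n-th root of unity in an extension K of F_q, and γ the permutation of {0,…,n−1} fixing even i and sending odd i to (i−2) mod n. Then for any a ∈ {0,…,n−1}, the K-span of {v^a, v^{a+n/2}} equals the K-span of {γ·v^a, γ·v^{a+n/2}}, where v^s = (α^{is})_{i=0}^{n−1} and (γ·v)_i = v_{γ^{−1}(i)}. Specifically, γ·v^a + γ·v^{a+n/2} = v^a + v^{a+n/2} and γ·v^a − γ·v^{a+n/2} = α^{2a}(v^a − v^{a+n/2}). -/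
/-- `8 ∣ n`, `q` odd prime power with `gcd(n,q)=1`, `α` a primitive n-th root
of unity in `K ⊇ F_q`, and `γ` the permutation fixing even indices and sending odd `i` to
`(i-2) mod n` (so `γ⁻¹` sends odd `i` to `(i+2) mod n`). For any `a < n`, the K-span of
`{v^a, v^{a+n/2}}` equals the K-span of `{γ·v^a, γ·v^{a+n/2}}`; specifically
`γ·v^a + γ·v^{a+n/2} = v^a + v^{a+n/2}` and `γ·v^a − γ·v^{a+n/2} = α^{2a}(v^a − v^{a+n/2})`. -/
theorem gamma_preserves_span (n q : ℕ) (hn : 8 ∣ n) (hn0 : 0 < n) (hq : IsPrimePow q)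
    (hqodd : Odd q) (hnq : Nat.gcd n q = 1)
    (K : Type*) [Field K] (α : K) (hα : IsPrimitiveRoot α n) (a : ℕ) (ha : a < n)
    (T : (Fin n → K) → (Fin n → K))
    (hT : ∀ v (i : Fin n), T v i =
      if (i : ℕ) % 2 = 0 then v i else v ⟨((i : ℕ) + 2) % n, Nat.mod_lt _ hn0⟩)
    (va vb : Fin n → K)
    (hva : va = fun i : Fin n => α ^ ((i : ℕ) * a))
    (hvb : vb = fun i : Fin n => α ^ ((i : ℕ) * (a + n / 2))) :
    Submodule.span K {va, vb} = Submodule.span K {T va, T vb} ∧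
      T va + T vb = va + vb ∧
      T va - T vb = α ^ (2 * a) • (va - vb) := by
  have h8 : 8 ≤ n := Nat.le_of_dvd hn0 hn
  have hn2 : 2 ∣ n := dvd_trans (by norm_num) hn
  have hm : α ^ (n / 2) = -1 := by
    have h1 : α ^ (n / 2) * α ^ (n / 2) = 1 := by
      rw [← pow_add, ← Nat.two_mul, Nat.two_mul_div_two_of_even (even_iff_two_dvd.mpr hn2),
        hα.pow_eq_one]
    have hne : α ^ (n / 2) ≠ 1 :=
      hα.pow_ne_one_of_pos_of_lt (by omega) (Nat.div_lt_self hn0 one_lt_two)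
    rcases mul_self_eq_one_iff.mp h1 with h | h
    · exact absurd h hne
    · exact h
  have hne1 : (-1 : K) ≠ 1 := by
    intro h
    exact (hα.pow_ne_one_of_pos_of_lt (l := n / 2) (by omega)
      (Nat.div_lt_self hn0 one_lt_two)) (hm.trans h)
  have h2K : (2 : K) ≠ 0 := by
    intro h
    apply hne1
    rw [neg_eq_iff_add_eq_zero, one_add_one_eq_two, h]
  have hα0 : α ≠ 0 := hα.ne_zero hn0.ne'
  have hpow : ∀ k : ℕ, α ^ (k % n) = α ^ k := by
    intro k
    conv_rhs => rw [← Nat.mod_add_div k n]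
    rw [pow_add, pow_mul, hα.pow_eq_one, one_pow, mul_one]
  have hvbva : ∀ i : Fin n, vb i = (-1 : K) ^ (i : ℕ) * va i := by
    intro i
    rw [hva, hvb]
    simp only
    have h' : α ^ ((i : ℕ) * (n / 2)) = (-1 : K) ^ (i : ℕ) := by
      rw [mul_comm, pow_mul, hm]
    rw [Nat.mul_add, pow_add, h', mul_comm]
  have hjpar : ∀ i : Fin n, ((i : ℕ) + 2) % n % 2 = (i : ℕ) % 2 := by
    intro i
    rw [Nat.mod_mod_of_dvd _ hn2]
    omega
  -- the two vector equations
  have e1 : T va + T vb = va + vb := by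
    funext i
    simp only [Pi.add_apply, hT]
    by_cases h : (i : ℕ) % 2 = 0
    · simp [h]
    · simp only [if_neg h]
      set j : Fin n := ⟨((i : ℕ) + 2) % n, Nat.mod_lt _ hn0⟩ with hjdef
      have hj : ((j : ℕ)) % 2 = 1 := by
        have := hjpar i; simp only [hjdef]; omega
      rw [hvbva j, hvbva i, Odd.neg_one_pow (Nat.odd_iff.mpr hj),
        Odd.neg_one_pow (Nat.odd_iff.mpr (by omega : (i : ℕ) % 2 = 1))]
      ring
  have e2 : T va - T vb = α ^ (2 * a) • (va - vb) := by
    funext i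
    simp only [Pi.sub_apply, Pi.smul_apply, hT, smul_eq_mul]
    by_cases h : (i : ℕ) % 2 = 0
    · simp only [if_pos h]
      rw [hvbva i, Even.neg_one_pow (Nat.even_iff.mpr h)]
      ring
    · simp only [if_neg h]
      set j : Fin n := ⟨((i : ℕ) + 2) % n, Nat.mod_lt _ hn0⟩ with hjdef
      have hj : ((j : ℕ)) % 2 = 1 := by
        have := hjpar i; simp only [hjdef]; omega
      rw [hvbva j, hvbva i, Odd.neg_one_pow (Nat.odd_iff.mpr hj),
        Odd.neg_one_pow (Nat.odd_iff.mpr (by omega : (i : ℕ) % 2 = 1)), hva]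
      simp only [hjdef]
      have hj' : α ^ ((((i : ℕ) + 2) % n) * a) = α ^ (((i : ℕ) + 2) * a) := by
        rw [pow_mul, hpow, ← pow_mul]
      rw [hj', add_mul, pow_add]
      ring
  have hc : α ^ (2 * a) ≠ 0 := pow_ne_zero _ hα0
  have hva' : va ∈ Submodule.span K ({va, vb} : Set (Fin n → K)) :=
    Submodule.subset_span (Set.mem_insert _ _)
  have hvb' : vb ∈ Submodule.span K ({va, vb} : Set (Fin n → K)) :=
    Submodule.subset_span (Set.mem_insert_of_mem _ rfl)
  have hTa' : T va ∈ Submodule.span K ({T va, T vb} : Set (Fin n → K)) :=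
    Submodule.subset_span (Set.mem_insert _ _)
  have hTb' : T vb ∈ Submodule.span K ({T va, T vb} : Set (Fin n → K)) :=
    Submodule.subset_span (Set.mem_insert_of_mem _ rfl)
  have key1 : T va = (2 : K)⁻¹ • ((va + vb) + α ^ (2 * a) • (va - vb)) := by
    rw [← e1, ← e2]
    have h : (T va + T vb) + (T va - T vb) = (2 : K) • T va := by module
    rw [h, smul_smul, inv_mul_cancel₀ h2K, one_smul]
  have key2 : T vb = (2 : K)⁻¹ • ((va + vb) - α ^ (2 * a) • (va - vb)) := by
    rw [← e1, ← e2]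
    have h : (T va + T vb) - (T va - T vb) = (2 : K) • T vb := by module
    rw [h, smul_smul, inv_mul_cancel₀ h2K, one_smul]
  have key3 : va = (2 : K)⁻¹ • ((T va + T vb) + (α ^ (2 * a))⁻¹ • (T va - T vb)) := by
    rw [e1, e2, smul_smul, inv_mul_cancel₀ hc, one_smul]
    have h : (va + vb) + (va - vb) = (2 : K) • va := by module
    rw [h, smul_smul, inv_mul_cancel₀ h2K, one_smul]
  have key4 : vb = (2 : K)⁻¹ • ((T va + T vb) - (α ^ (2 * a))⁻¹ • (T va - T vb)) := by
    rw [e1, e2, smul_smul, inv_mul_cancel₀ hc, one_smul]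
    have h : (va + vb) - (va - vb) = (2 : K) • vb := by module
    rw [h, smul_smul, inv_mul_cancel₀ h2K, one_smul]
  refine ⟨le_antisymm ?_ ?_, e1, e2⟩
  · rw [Submodule.span_le]
    rintro x (hx | hx)
    · have hmem : (2 : K)⁻¹ • ((T va + T vb) + (α ^ (2 * a))⁻¹ • (T va - T vb)) ∈
          Submodule.span K ({T va, T vb} : Set (Fin n → K)) :=
        Submodule.smul_mem _ _ (Submodule.add_mem _ (Submodule.add_mem _ hTa' hTb')
          (Submodule.smul_mem _ _ (Submodule.sub_mem _ hTa' hTb')))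
      rw [hx]
      nth_rewrite 2 [key3]
      exact hmem
    · have hmem : (2 : K)⁻¹ • ((T va + T vb) - (α ^ (2 * a))⁻¹ • (T va - T vb)) ∈
          Submodule.span K ({T va, T vb} : Set (Fin n → K)) :=
        Submodule.smul_mem _ _ (Submodule.sub_mem _ (Submodule.add_mem _ hTa' hTb')
          (Submodule.smul_mem _ _ (Submodule.sub_mem _ hTa' hTb')))
      rw [Set.mem_singleton_iff] at hx
      rw [hx]
      nth_rewrite 2 [key4]
      exact hmem
  · rw [Submodule.span_le]
    rintro x (hx | hx)
    · have hmem : (2 : K)⁻¹ • ((va + vb) + α ^ (2 * a) • (va - vb)) ∈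
          Submodule.span K ({va, vb} : Set (Fin n → K)) :=
        Submodule.smul_mem _ _ (Submodule.add_mem _ (Submodule.add_mem _ hva' hvb')
          (Submodule.smul_mem _ _ (Submodule.sub_mem _ hva' hvb')))
      rw [hx]
      nth_rewrite 1 [key1]
      exact hmem
    · have hmem : (2 : K)⁻¹ • ((va + vb) - α ^ (2 * a) • (va - vb)) ∈
          Submodule.span K ({va, vb} : Set (Fin n → K)) :=
        Submodule.smul_mem _ _ (Submodule.sub_mem _ (Submodule.add_mem _ hva' hvb')
          (Submodule.smul_mem _ _ (Submodule.sub_mem _ hva' hvb')))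
      rw [Set.mem_singleton_iff] at hx
      rw [hx]
      nth_rewrite 1 [key2]
      exact hmem
end

section
/- Let C and C' be linear codes over a finite field F_q of length n. If there is an F_q-linear bijection φ : C → C' preserving Hamming weight, then there exists an n×n monomial matrix M over F_q with C' = C·M; conversely, multiplication by a monomial matrix is a weight-preserving linear bijection. -/
/-!
Read the coordinates of `C` as linear functionals `λᵢ c = cᵢ` on `C`, and those of `C'` pulled
back along `φ` as `μᵢ c = (φ c)ᵢ`. Weight preservation says that every `c` is killed by as many
`λᵢ` as `μᵢ`. Summing over a subspace `W ≤ C` gives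
`q · ∑_{w ∈ W} wt w = (q - 1) |W| · #{i | λᵢ ≠ 0 on W}`, so for every `W` equally many `λᵢ` as
`μᵢ` vanish on `W`. Inverting these counts over the well-founded lattice of subspaces, the
kernels of `(λᵢ)` and `(μᵢ)` agree as multisets; after matching them by a permutation,
functionals with equal kernels are proportional, and the proportionality constants are the
diagonal of the monomial matrix.
-/

open scoped Classical

open Finset LinearMap

theorem card_filter_eq_eq_of_card_filter_le_eq {ι α : Type*} [Fintype ι] [PartialOrder α]
    [WellFoundedGT α] {f g : ι → α} (h : ∀ a, #{i | a ≤ f i} = #{i | a ≤ g i}) (a : α) :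
    #{i | f i = a} = #{i | g i = a} := by
  induction a using WellFoundedGT.induction with
  | _ a ih =>
  set S := (univ.image f ∪ univ.image g).filter (a < ·)
  have hle : ∀ k : ι → α, #{i | a ≤ k i} = #{i | k i = a} + #{i | a < k i} := fun k => by
    rw [← card_union_of_disjoint (disjoint_filter.2 fun i _ h₁ h₂ => h₂.ne' h₁), ← filter_or]
    simp only [le_iff_eq_or_lt, eq_comm]
  have hlt : ∀ k : ι → α, (∀ i, k i ∈ univ.image f ∪ univ.image g) →
      #{i | a < k i} = ∑ b ∈ S, #{i | k i = b} := fun k hk => by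
    rw [card_eq_sum_card_fiberwise (f := k) (t := S) fun i hi => by
      simp_all [S]]
    refine sum_congr rfl fun b hb => ?_
    rw [filter_filter]
    exact congrArg card (filter_congr fun i _ =>
      ⟨And.right, fun hb' => ⟨hb' ▸ (mem_filter.1 hb).2, hb'⟩⟩)
  have hS : ∑ b ∈ S, #{i | f i = b} = ∑ b ∈ S, #{i | g i = b} :=
    sum_congr rfl fun b hb => ih b (mem_filter.1 hb).2
  have := h a
  rw [hle f, hle g, hlt f (by simp), hlt g (by simp), hS] at this
  omega

theorem exists_perm_eq_comp_of_card_fiber_eq {ι α : Type*} [Fintype ι] {f g : ι → α}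
    (h : ∀ a, #{i | f i = a} = #{i | g i = a}) : ∃ σ : Equiv.Perm ι, ∀ i, f i = g (σ i) := by
  have e : ∀ a, {i // f i = a} ≃ {i // g i = a} := fun a =>
    Fintype.equivOfCardEq (by rw [Fintype.card_subtype, Fintype.card_subtype, h a])
  exact ⟨Equiv.ofFiberEquiv e, fun i => (Equiv.ofFiberEquiv_map e i).symm⟩

theorem Module.Dual.exists_unit_smul_eq_of_ker_eq {K V : Type*} [Field K] [AddCommGroup V]
    [Module K V] [FiniteDimensional K V] {f g : Module.Dual K V} (h : ker f = ker g) :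
    ∃ u : Kˣ, g = u • f := by
  by_cases hf : f = 0
  · refine ⟨1, ?_⟩
    rw [one_smul, hf, ← ker_eq_top, ← h, hf, ker_zero]
  obtain ⟨x, hx⟩ : ∃ x, f x ≠ 0 := by
    by_contra! hx
    exact hf (LinearMap.ext hx)
  have hgx : g x ≠ 0 := fun hgx => hx (by rwa [← mem_ker, h, mem_ker])
  let u := Units.mk0 (g x / f x) (div_ne_zero hgx hx)
  refine ⟨u, (Module.Dual.eq_of_ker_eq_of_apply_eq x ?_ ?_ ?_).symm⟩
  · rw [Units.smul_def, ker_smul _ _ u.ne_zero, h]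
  · simp [u, hx]
  · simp [u, hx, hgx]

section Counting

variable {F V : Type*} [Field F] [Fintype F] [AddCommGroup V] [Module F V] [Fintype V]

theorem Module.Dual.card_mul_card_ker {f : Module.Dual F V} (hf : f ≠ 0) :
    Fintype.card F * Nat.card (ker f) = Fintype.card V := by
  rw [Module.card_eq_pow_finrank (K := F) (V := V), Nat.card_eq_fintype_card,
    Module.card_eq_pow_finrank (K := F) (V := ker f),
    ← Module.Dual.finrank_ker_add_one_of_ne_zero hf, pow_succ, mul_comm]

theorem Module.Dual.card_mul_card_filter_ne_zero {f : Module.Dual F V} (hf : f ≠ 0) :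
    Fintype.card F * #{v | f v ≠ 0} = (Fintype.card F - 1) * Fintype.card V := by
  have hker : Nat.card (ker f) = #{v | f v = 0} := by
    rw [Nat.card_eq_fintype_card, ← Fintype.card_subtype]; rfl
  have hsplit : #{v | f v = 0} + #{v | f v ≠ 0} = Fintype.card V :=
    card_filter_add_card_filter_not _
  have hcard := card_mul_card_ker hf
  rw [hker] at hcard
  rw [Nat.sub_one_mul, ← hsplit, mul_add]
  omega

theorem sum_card_filter_apply_ne_zero {ι : Type*} [Fintype ι] (f : ι → Module.Dual F V) :
    Fintype.card F * ∑ v, #{i | f i v ≠ 0}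
      = (Fintype.card F - 1) * Fintype.card V * #{i | f i ≠ 0} := by
  have hswap : ∑ v, #{i | f i v ≠ 0} = ∑ i, #{v | f i v ≠ 0} := by
    simp only [card_filter]
    exact sum_comm
  rw [hswap, mul_sum, card_filter, mul_sum]
  refine sum_congr rfl fun i _ => ?_
  by_cases hf : f i = 0
  · simp [hf]
  · simp [hf, Module.Dual.card_mul_card_filter_ne_zero hf]

variable {ι : Type*} [Fintype ι] {f g : ι → Module.Dual F V}

theorem card_filter_ne_zero_eq_of_weight_eq (h : ∀ v, #{i | f i v ≠ 0} = #{i | g i v ≠ 0}) :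
    #{i | f i ≠ 0} = #{i | g i ≠ 0} := by
  have hpos : 0 < (Fintype.card F - 1) * Fintype.card V :=
    Nat.mul_pos (Nat.sub_pos_of_lt Fintype.one_lt_card) Fintype.card_pos
  refine Nat.eq_of_mul_eq_mul_left hpos ?_
  rw [← sum_card_filter_apply_ne_zero, ← sum_card_filter_apply_ne_zero,
    sum_congr rfl fun v _ => h v]

theorem card_filter_le_ker_eq_of_weight_eq (h : ∀ v, #{i | f i v ≠ 0} = #{i | g i v ≠ 0})
    (W : Submodule F V) : #{i | W ≤ ker (f i)} = #{i | W ≤ ker (g i)} := by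
  have hW := card_filter_ne_zero_eq_of_weight_eq (f := fun i => f i ∘ₗ W.subtype)
    (g := fun i => g i ∘ₗ W.subtype) fun w => h w
  have hf := card_filter_add_card_filter_not (s := univ) fun i => f i ∘ₗ W.subtype = 0
  have hg := card_filter_add_card_filter_not (s := univ) fun i => g i ∘ₗ W.subtype = 0
  simp only [ne_eq, ← le_ker_iff_comp_subtype_eq_zero] at hf hg hW
  omega

theorem Module.Dual.exists_perm_units_smul_of_weight_eq
    (h : ∀ v, #{i | f i v ≠ 0} = #{i | g i v ≠ 0}) :
    ∃ (σ : Equiv.Perm ι) (u : ι → Fˣ), ∀ i, g i = u i • f (σ i) := by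
  obtain ⟨σ, hσ⟩ := exists_perm_eq_comp_of_card_fiber_eq
    (card_filter_eq_eq_of_card_filter_le_eq (f := fun i => ker (g i)) (g := fun i => ker (f i))
      fun W => (card_filter_le_ker_eq_of_weight_eq h W).symm)
  choose u hu using fun i => Module.Dual.exists_unit_smul_eq_of_ker_eq (hσ i).symm
  exact ⟨σ, u, hu⟩

end Counting

section Monomial

variable {R ι : Type*} [CommRing R]

def monomialEquiv (π : Equiv.Perm ι) (u : ι → Rˣ) : (ι → R) ≃ₗ[R] (ι → R) :=
  (LinearEquiv.funCongrLeft R R π).trans (LinearEquiv.piCongrRight fun i => .smulOfUnit (u i))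

@[simp]
theorem monomialEquiv_apply (π : Equiv.Perm ι) (u : ι → Rˣ) (v : ι → R) (i : ι) :
    monomialEquiv π u v i = u i * v (π i) := rfl

theorem card_filter_monomialEquiv_apply_ne_zero [Fintype ι] (π : Equiv.Perm ι) (u : ι → Rˣ)
    (v : ι → R) : #{i | monomialEquiv π u v i ≠ 0} = #{i | v i ≠ 0} :=
  card_equiv π fun i => by simp

end Monomial

theorem Submodule.coe_eq_image_of_linearEquiv {R M : Type*} [Semiring R] [AddCommMonoid M]
    [Module R M] {C C' : Submodule R M} (φ : C ≃ₗ[R] C') (T : M → M)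
    (hT : ∀ c : C, (φ c : M) = T c) : (C' : Set M) = T '' C := by
  ext w
  constructor
  · intro hw
    exact ⟨φ.symm ⟨w, hw⟩, (φ.symm ⟨w, hw⟩).2, by rw [← hT, φ.apply_symm_apply]⟩
  · rintro ⟨v, hv, rfl⟩
    rw [← hT ⟨v, hv⟩]
    exact (φ ⟨v, hv⟩).2

/-- MacWilliams extension theorem: two linear codes `C, C'` of length `n`
over a finite field `F_q` admit a Hamming-weight-preserving `F_q`-linear bijection between
them if and only if there is a monomial transformation (a permutation `π` together with
nonzero scalars `u`) carrying `C` onto `C'`. -/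
theorem macwilliams_extension (F : Type*) [Field F] [Fintype F] (n : ℕ)
    (C C' : Submodule F (Fin n → F)) :
    (∃ φ : C ≃ₗ[F] C', ∀ c : C,
        (Finset.univ.filter fun i => (c : Fin n → F) i ≠ 0).card =
        (Finset.univ.filter fun i => (φ c : Fin n → F) i ≠ 0).card) ↔
    (∃ (π : Equiv.Perm (Fin n)) (u : Fin n → Fˣ),
        (C' : Set (Fin n → F)) =
          (fun v : Fin n → F => fun i => (u i : F) * v (π i)) '' (C : Set (Fin n → F))) := by
  constructor
  · rintro ⟨φ, hφ⟩
    obtain ⟨π, u, hu⟩ := Module.Dual.exists_perm_units_smul_of_weight_eq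
      (f := fun i => proj i ∘ₗ C.subtype) (g := fun i => proj i ∘ₗ C'.subtype ∘ₗ φ.toLinearMap) hφ
    refine ⟨π, u, Submodule.coe_eq_image_of_linearEquiv φ _ fun c => funext fun i => ?_⟩
    simpa [Units.smul_def] using LinearMap.congr_fun (hu i) c
  · rintro ⟨π, u, hC'⟩
    have hmap : C.map (monomialEquiv π u : (Fin n → F) →ₗ[F] Fin n → F) = C' :=
      SetLike.coe_injective (by rw [Submodule.map_coe, hC']; rfl)
    exact ⟨(monomialEquiv π u).ofSubmodules C C' hmap,
      fun c => (card_filter_monomialEquiv_apply_ne_zero π u c).symm⟩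
end

section
/- Let n = 8k with k a positive integer, q an odd prime power with gcd(n, q) = 1, α a primitive n-th root of unity in an extension K of F_q, and let σ, D be as follows: σ(i) = i if i ≡ 0,1 (mod 4), σ(i) = (i + n/2) mod n otherwise; d_i = −1 if i ≡ 1,2 (mod 4), d_i = 1 otherwise. Then the K-span of {v^{n/4}, v^{3n/4}} is mapped by the monomial transformation (v ↦ (d_i v_{σ^{−1}(i)})_i) onto the K-span of {v^0, v^{n/2}}, where v^s = (α^{is})_{i=0}^{n−1}. -/
/-- `n = 8k`, `q` odd prime power with `gcd(n,q)=1`, `α` a primitive n-th root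
of unity in `K ⊇ F_q`. The monomial transformation `v ↦ (dᵢ v_{σ⁻¹(i)})ᵢ` (with `σ` the
involution fixing `i ≡ 0,1 (mod 4)` and adding `n/2` otherwise, and signs `dᵢ = -1` for
`i ≡ 1,2 (mod 4)`, `dᵢ = 1` otherwise) maps the K-span of `{v^{n/4}, v^{3n/4}}` onto the
K-span of `{v^0, v^{n/2}}`. -/
theorem monomial_maps_quarter_span (n q k : ℕ) (hk : 0 < k) (hn : n = 8 * k)
    (hq : IsPrimePow q) (hqodd : Odd q) (hnq : Nat.gcd n q = 1) (hn0 : 0 < n)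
    (K : Type*) [Field K] (α : K) (hα : IsPrimitiveRoot α n)
    (σ : ℕ → ℕ) (hσ : ∀ i, σ i = if i % 4 = 0 ∨ i % 4 = 1 then i else (i + n / 2) % n)
    (d : ℕ → K) (hd : ∀ i, d i = if i % 4 = 1 ∨ i % 4 = 2 then -1 else 1)
    (T : (Fin n → K) → (Fin n → K))
    (hT : ∀ v (i : Fin n), T v i = d (i : ℕ) * v ⟨σ (i : ℕ) % n, Nat.mod_lt _ hn0⟩)
    (v1 v3 v0 vh : Fin n → K)
    (hv1 : v1 = fun i : Fin n => α ^ ((i : ℕ) * (n / 4)))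
    (hv3 : v3 = fun i : Fin n => α ^ ((i : ℕ) * (3 * n / 4)))
    (hv0 : v0 = fun _ : Fin n => (1 : K))
    (hvh : vh = fun i : Fin n => α ^ ((i : ℕ) * (n / 2))) :
    T '' (Submodule.span K {v1, v3} : Set (Fin n → K)) =
      (Submodule.span K {v0, vh} : Set (Fin n → K)) := by
  have hn2 : n / 2 = 4 * k := by omega
  have hn4 : n / 4 = 2 * k := by omega
  have h3n4 : 3 * n / 4 = 6 * k := by omega
  have hα1 : α ^ n = 1 := hα.pow_eq_one
  have hmod : ∀ a : ℕ, α ^ a = α ^ (a % n) := by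
    intro a
    conv_lhs => rw [← Nat.div_add_mod a n]
    rw [pow_add, pow_mul, hα1, one_pow, one_mul]
  have hmul : ∀ x s : ℕ, α ^ (x % n * s) = α ^ (x * s) := by
    intro x s
    rw [hmod (x % n * s), hmod (x * s)]
    exact congrArg (fun m => α ^ m) ((Nat.mod_modEq x n).mul_right s)
  set b : K := α ^ (2 * k) with hb
  have hne4 : α ^ (4 * k) ≠ 1 := hα.pow_ne_one_of_pos_of_lt (by omega) (by omega)
  have hb4 : α ^ (4 * k) = -1 := by
    have h1 : α ^ (4 * k) * α ^ (4 * k) = 1 := by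
      rw [← pow_add, show 4 * k + 4 * k = n by omega, hα1]
    rcases mul_self_eq_one_iff.mp h1 with h | h
    · exact absurd h hne4
    · exact h
  have hbb : b ^ 2 = -1 := by
    rw [hb, ← pow_mul, show 2 * k * 2 = 4 * k by ring, hb4]
  have h2 : (2 : K) ≠ 0 := by
    intro h
    apply hne4
    rw [hb4]
    linear_combination -h
  -- transport exponents through σ
  have hS : ∀ s t : ℕ, 4 * k * s = 8 * k * t → ∀ i : ℕ,
      α ^ (σ i % n * s) = α ^ (i * s) := by
    intro s t hst i
    rw [hσ i]
    split_ifs with h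
    · exact hmul i s
    · rw [hmul ((i + n / 2) % n) s, hmul (i + n / 2) s]
      have he : (i + n / 2) * s = i * s + n * t := by
        rw [hn2, hn]
        calc (i + 4 * k) * s = i * s + 4 * k * s := by ring
        _ = i * s + 8 * k * t := by rw [hst]
      rw [he, pow_add, pow_mul α n t, hα1, one_pow, mul_one]
  -- reduce exponent to i % 4
  have hred : ∀ s i : ℕ, n ∣ 4 * s → α ^ (i * s) = α ^ (i % 4 * s) := by
    rintro s i ⟨c, hc⟩
    conv_lhs => rw [← Nat.div_add_mod i 4]
    rw [add_mul, pow_add]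
    have he : 4 * (i / 4) * s = n * (c * (i / 4)) := by
      calc 4 * (i / 4) * s = 4 * s * (i / 4) := by ring
      _ = n * (c * (i / 4)) := by rw [hc]; ring
    rw [he, pow_mul, hα1, one_pow, one_mul]
  have hv1val : ∀ i : ℕ, α ^ (σ i % n * (n / 4)) = b ^ (i % 4) := by
    intro i
    rw [hn4, hS (2 * k) k (by ring) i, hred (2 * k) i ⟨1, by omega⟩,
      mul_comm (i % 4) (2 * k), pow_mul]
  have hv3val : ∀ i : ℕ, α ^ (σ i % n * (3 * n / 4)) = b ^ (3 * (i % 4)) := by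
    intro i
    rw [h3n4, hS (6 * k) (3 * k) (by ring) i, hred (6 * k) i ⟨3, by omega⟩,
      show i % 4 * (6 * k) = 2 * k * (3 * (i % 4)) by ring, pow_mul]
  have hvhval : ∀ i : ℕ, α ^ (i * (n / 2)) = (-1 : K) ^ (i % 4) := by
    intro i
    rw [hn2, hred (4 * k) i ⟨2, by omega⟩,
      show i % 4 * (4 * k) = 4 * k * (i % 4) by ring, pow_mul, hb4]
  clear_value b
  have hp3 : b ^ 3 = -b := by linear_combination b * hbb
  have hp4 : b ^ 4 = 1 := by linear_combination (b^2 - 1) * hbb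
  have hp6 : b ^ 6 = -1 := by linear_combination (b^4 - b^2 + 1) * hbb
  have hp7 : b ^ 7 = -b := by linear_combination (b^5 - b^3 + b) * hbb
  have hp9 : b ^ 9 = b := by linear_combination (b^7 - b^5 + b^3 - b) * hbb
  have hp10 : b ^ 10 = -1 := by linear_combination (b^8 - b^6 + b^4 - b^2 + 1) * hbb
  have hcase : ∀ i : ℕ, i % 4 = 0 ∨ i % 4 = 1 ∨ i % 4 = 2 ∨ i % 4 = 3 := by
    intro i; omega
  -- the four key identities
  have E1 : T v1 = ((2:K)⁻¹ * (1 - b)) • v0 + ((2:K)⁻¹ * (1 + b)) • vh := by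
    funext i
    rw [hT, hv1, hv0, hvh]
    simp only [Pi.add_apply, Pi.smul_apply, smul_eq_mul]
    rw [hv1val, hvhval, hd]
    rcases hcase (i : ℕ) with h | h | h | h <;> rw [h] <;> norm_num [hbb, hp3, hp4, hp6, hp7, hp9, hp10] <;>
      field_simp <;> first
        | ring1
        | linear_combination (1) * hbb
        | linear_combination (-1) * hbb
        | linear_combination (b) * hbb
        | linear_combination (-b) * hbb
        | linear_combination (1+b) * hbb
        | linear_combination (1-b) * hbb
        | linear_combination (-1+b) * hbb
        | linear_combination (-1-b) * hbb
        | linear_combination (2+b) * hbb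
        | linear_combination (2-b) * hbb
        | linear_combination (-2+b) * hbb
        | linear_combination (-2-b) * hbb
        | linear_combination (3+b) * hbb
        | linear_combination (3-b) * hbb
        | linear_combination (-3+b) * hbb
        | linear_combination (-3-b) * hbb
        | linear_combination (4+b) * hbb
        | linear_combination (4-b) * hbb
        | linear_combination (-4+b) * hbb
        | linear_combination (-4-b) * hbb
        | linear_combination (2) * hbb
        | linear_combination (-2) * hbb
        | linear_combination (4) * hbb
        | linear_combination (-4) * hbb
        | linear_combination (2*b) * hbb
        | linear_combination (4+2*b) * hbb
        | linear_combination (4-2*b) * hbb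
        | linear_combination (-4+2*b) * hbb
        | linear_combination (-4-2*b) * hbb
        | linear_combination (-2*b) * hbb
  have E3 : T v3 = ((2:K)⁻¹ * (1 + b)) • v0 + ((2:K)⁻¹ * (1 - b)) • vh := by
    funext i
    rw [hT, hv3, hv0, hvh]
    simp only [Pi.add_apply, Pi.smul_apply, smul_eq_mul]
    rw [hv3val, hvhval, hd]
    rcases hcase (i : ℕ) with h | h | h | h <;> rw [h] <;> norm_num [hbb, hp3, hp4, hp6, hp7, hp9, hp10] <;>
      field_simp <;> first
        | ring1
        | linear_combination (1) * hbb
        | linear_combination (-1) * hbb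
        | linear_combination (b) * hbb
        | linear_combination (-b) * hbb
        | linear_combination (1+b) * hbb
        | linear_combination (1-b) * hbb
        | linear_combination (-1+b) * hbb
        | linear_combination (-1-b) * hbb
        | linear_combination (2+b) * hbb
        | linear_combination (2-b) * hbb
        | linear_combination (-2+b) * hbb
        | linear_combination (-2-b) * hbb
        | linear_combination (3+b) * hbb
        | linear_combination (3-b) * hbb
        | linear_combination (-3+b) * hbb
        | linear_combination (-3-b) * hbb
        | linear_combination (4+b) * hbb
        | linear_combination (4-b) * hbb
        | linear_combination (-4+b) * hbb
        | linear_combination (-4-b) * hbb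
        | linear_combination (2) * hbb
        | linear_combination (-2) * hbb
        | linear_combination (4) * hbb
        | linear_combination (-4) * hbb
        | linear_combination (2*b) * hbb
        | linear_combination (4+2*b) * hbb
        | linear_combination (4-2*b) * hbb
        | linear_combination (-4+2*b) * hbb
        | linear_combination (-4-2*b) * hbb
        | linear_combination (-2*b) * hbb
  have F0 : T (((2:K)⁻¹ * (1 + b)) • v1 + ((2:K)⁻¹ * (1 - b)) • v3) = v0 := by
    funext i
    rw [hT, hv1, hv3, hv0]
    simp only [Pi.add_apply, Pi.smul_apply, smul_eq_mul]
    rw [hv1val, hv3val, hd]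
    rcases hcase (i : ℕ) with h | h | h | h <;> rw [h] <;> norm_num [hbb, hp3, hp4, hp6, hp7, hp9, hp10] <;>
      field_simp <;> first
        | ring1
        | linear_combination (1) * hbb
        | linear_combination (-1) * hbb
        | linear_combination (b) * hbb
        | linear_combination (-b) * hbb
        | linear_combination (1+b) * hbb
        | linear_combination (1-b) * hbb
        | linear_combination (-1+b) * hbb
        | linear_combination (-1-b) * hbb
        | linear_combination (2+b) * hbb
        | linear_combination (2-b) * hbb
        | linear_combination (-2+b) * hbb
        | linear_combination (-2-b) * hbb
        | linear_combination (3+b) * hbb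
        | linear_combination (3-b) * hbb
        | linear_combination (-3+b) * hbb
        | linear_combination (-3-b) * hbb
        | linear_combination (4+b) * hbb
        | linear_combination (4-b) * hbb
        | linear_combination (-4+b) * hbb
        | linear_combination (-4-b) * hbb
        | linear_combination (2) * hbb
        | linear_combination (-2) * hbb
        | linear_combination (4) * hbb
        | linear_combination (-4) * hbb
        | linear_combination (2*b) * hbb
        | linear_combination (4+2*b) * hbb
        | linear_combination (4-2*b) * hbb
        | linear_combination (-4+2*b) * hbb
        | linear_combination (-4-2*b) * hbb
        | linear_combination (-2*b) * hbb
  have Fh : T (((2:K)⁻¹ * (1 - b)) • v1 + ((2:K)⁻¹ * (1 + b)) • v3) = vh := by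
    funext i
    rw [hT, hv1, hv3, hvh]
    simp only [Pi.add_apply, Pi.smul_apply, smul_eq_mul]
    rw [hv1val, hvhval, hv3val, hd]
    rcases hcase (i : ℕ) with h | h | h | h <;> rw [h] <;> norm_num [hbb, hp3, hp4, hp6, hp7, hp9, hp10] <;>
      field_simp <;> first
        | ring1
        | linear_combination (1) * hbb
        | linear_combination (-1) * hbb
        | linear_combination (b) * hbb
        | linear_combination (-b) * hbb
        | linear_combination (1+b) * hbb
        | linear_combination (1-b) * hbb
        | linear_combination (-1+b) * hbb
        | linear_combination (-1-b) * hbb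
        | linear_combination (2+b) * hbb
        | linear_combination (2-b) * hbb
        | linear_combination (-2+b) * hbb
        | linear_combination (-2-b) * hbb
        | linear_combination (3+b) * hbb
        | linear_combination (3-b) * hbb
        | linear_combination (-3+b) * hbb
        | linear_combination (-3-b) * hbb
        | linear_combination (4+b) * hbb
        | linear_combination (4-b) * hbb
        | linear_combination (-4+b) * hbb
        | linear_combination (-4-b) * hbb
        | linear_combination (2) * hbb
        | linear_combination (-2) * hbb
        | linear_combination (4) * hbb
        | linear_combination (-4) * hbb
        | linear_combination (2*b) * hbb
        | linear_combination (4+2*b) * hbb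
        | linear_combination (4-2*b) * hbb
        | linear_combination (-4+2*b) * hbb
        | linear_combination (-4-2*b) * hbb
        | linear_combination (-2*b) * hbb
  have hTlin : ∀ (x y : K) (u w : Fin n → K), T (x • u + y • w) = x • T u + y • T w := by
    intro x y u w
    funext i
    simp only [hT, Pi.add_apply, Pi.smul_apply, smul_eq_mul]
    ring
  ext w
  simp only [Set.mem_image, SetLike.mem_coe, Submodule.mem_span_pair]
  constructor
  · rintro ⟨u, ⟨x, y, rfl⟩, rfl⟩
    refine ⟨x * ((2:K)⁻¹ * (1 - b)) + y * ((2:K)⁻¹ * (1 + b)),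
      x * ((2:K)⁻¹ * (1 + b)) + y * ((2:K)⁻¹ * (1 - b)), ?_⟩
    rw [hTlin, E1, E3]
    module
  · rintro ⟨x, y, rfl⟩
    refine ⟨x • (((2:K)⁻¹ * (1 + b)) • v1 + ((2:K)⁻¹ * (1 - b)) • v3) +
      y • (((2:K)⁻¹ * (1 - b)) • v1 + ((2:K)⁻¹ * (1 + b)) • v3),
      ⟨x * ((2:K)⁻¹ * (1 + b)) + y * ((2:K)⁻¹ * (1 - b)),
        x * ((2:K)⁻¹ * (1 - b)) + y * ((2:K)⁻¹ * (1 + b)), by module⟩, ?_⟩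
    rw [hTlin, F0, Fh]
end
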